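/- Let p be a prime and let R be an infinite commutative domain of characteristic p. Let n ≥ 1 and let f ∈ R[t_1, …, t_n] be a nonzero polynomial, with associated evaluation function E(f) : R^n → R, x ↦ f(x). Then fdeg(E(f)) = σ_p(f): that is, with d := σ_p(f), every (d+1)-fold iterated difference of E(f) vanishes, but if d ≥ 1 there exist a_1, …, a_d ∈ R^n with Δ_{a_1}⋯Δ_{a_d} E(f) ≠ 0 (and if d = 0 then E(f) ≠ 0). -/

import Mathlib

/-- The difference operator `Δ_a` sending `f` to `x ↦ f (x + a) - f x`. -/
def disc {A B : Type*} [AddCommGroup A] [AddCommGroup B] (a : A) (f : A → B) : A → B :=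
  fun x => f (x + a) - f x

/-- Iterated difference operator `Δ_{a_1} ⋯ Δ_{a_k} f` along a list `[a_1, …, a_k]`. -/
def multiDisc {A B : Type*} [AddCommGroup A] [AddCommGroup B] : List A → (A → B) → (A → B)
  | [], f => f
  | a :: l, f => disc a (multiDisc l f)

/-- `FdegLE f d` says that the functional degree of `f` is at most `d`, i.e. all
`(d+1)`-fold iterated differences of `f` vanish. -/
def FdegLE {A B : Type*} [AddCommGroup A] [AddCommGroup B] (f : A → B) (d : ℕ) : Prop :=
  ∀ l : List A, l.length = d + 1 → multiDisc l f = 0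

/-- The `p`-weight degree `σ_p(f)` of a multivariate polynomial: the maximum over the
monomials `t_1^{d_1} ⋯ t_n^{d_n}` occurring in `f` (with nonzero coefficient) of
`σ_p(d_1) + ⋯ + σ_p(d_n)`, where `σ_p(d)` is the sum of the base-`p` digits of `d`. -/
def pWeightDeg (p : ℕ) {R : Type*} [CommSemiring R] {n : ℕ}
    (f : MvPolynomial (Fin n) R) : ℕ :=
  f.support.sup fun m => ∑ i, (Nat.digits p (m i)).sum

/-!
In characteristic `p` we have `(X_i + a_i) ^ p ^ j = X_i ^ p ^ j + a_i ^ p ^ j`. Peeling such a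
factor `X_i ^ p ^ j` off a monomial `X ^ m` lowers its weight `σ_p(m)` by exactly one, so by
induction on the weight, and by subadditivity of `σ_p`, the difference `f(X + a) - f(X)` has only
monomials of weight `< d` when all monomials of `f` have weight `≤ d`. Hence `σ_p(f) + 1`
differences kill `E(f)`.

Conversely, take a monomial `X ^ m` of `f` and let `p ^ j` be the place value of the lowest
nonzero base-`p` digit of some `m_i`, so that `m = m₂ + p ^ j • e_i` with `σ_p(m₂) = σ_p(m) - 1`. The coefficient of
`X ^ m₂` in `f(X + t e_i) - f(X)` is a polynomial in `t` whose `t ^ p ^ j`-coefficient is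
`C(m_i, p ^ j) · coeff_m f`, nonzero by Kummer's theorem (there are no carries). Over an infinite
domain some `t` keeps `X ^ m₂`, and induction on `σ_p(m)` yields `σ_p(m)` differences that do
not kill `E(f)`.
-/

namespace Nat

variable {p : ℕ}

theorem digits_sum_add_le [Fact p.Prime] (a b : ℕ) :
    (p.digits (a + b)).sum ≤ (p.digits a).sum + (p.digits b).sum := by
  have hfac : padicValNat p (a + b)! =
      padicValNat p ((a + b).choose a) + padicValNat p a ! + padicValNat p b ! := by
    have h := choose_mul_factorial_mul_factorial (le_add_right a b)
    rw [add_tsub_cancel_left] at h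
    have hc := (choose_pos (le_add_right a b)).ne'
    rw [← h, padicValNat.mul (mul_ne_zero hc (factorial_ne_zero a)) (factorial_ne_zero b),
      padicValNat.mul hc (factorial_ne_zero a)]
  have hab := sub_one_mul_padicValNat_factorial (p := p) (a + b)
  have ha := sub_one_mul_padicValNat_factorial (p := p) a
  have hb := sub_one_mul_padicValNat_factorial (p := p) b
  rw [hfac, mul_add, mul_add] at hab
  have := digit_sum_le p a
  have := digit_sum_le p b
  have := digit_sum_le p (a + b)
  omega

theorem digits_sum_add_mul {b : ℕ} (hb : 1 < b) {x : ℕ} (hx : x < b) (y : ℕ) :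
    (b.digits (x + b * y)).sum = x + (b.digits y).sum := by
  by_cases h : x = 0 ∧ y = 0
  · simp [h.1, h.2]
  · rw [digits_add b hb x y hx (by tauto), List.sum_cons]

theorem digits_sum_sub_one {b M : ℕ} (hb : 1 < b) (hM : ¬ b ∣ M) :
    (b.digits (M - 1)).sum + 1 = (b.digits M).sum := by
  have hr : M % b ≠ 0 := fun h => hM (dvd_of_mod_eq_zero h)
  have hrb : M % b < b := mod_lt M (by omega)
  have hM' := digits_sum_add_mul hb hrb (M / b)
  have hM1 := digits_sum_add_mul hb (x := M % b - 1) (by omega) (M / b)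
  rw [mod_add_div] at hM'
  rw [show M % b - 1 + b * (M / b) = M - 1 by have := mod_add_div M b; omega] at hM1
  omega

theorem digits_sum_pow_mul {b : ℕ} (hb : 1 < b) (j M : ℕ) :
    (b.digits (b ^ j * M)).sum = (b.digits M).sum := by
  rcases eq_or_ne M 0 with rfl | hM
  · simp
  · simp [digits_base_pow_mul hb (pos_of_ne_zero hM)]

theorem digits_sum_pow {b : ℕ} (hb : 1 < b) (j : ℕ) : (b.digits (b ^ j)).sum = 1 := by
  simpa [digits_of_lt b 1 one_ne_zero hb] using digits_sum_pow_mul hb j 1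

theorem not_dvd_choose_of_digits_sum_add_eq [hp : Fact p.Prime] {n k : ℕ} (hk : k ≤ n)
    (h : (p.digits k).sum + (p.digits (n - k)).sum = (p.digits n).sum) :
    ¬ p ∣ n.choose k := by
  have hv := sub_one_mul_padicValNat_choose_eq_sub_sum_digits (p := p) hk
  rw [h, Nat.sub_self, mul_eq_zero, padicValNat.eq_zero_iff] at hv
  have := hp.out.one_lt
  have := choose_pos hk
  omega

theorem exists_pow_le_digits_sum_sub_pow_add_one [hp : Fact p.Prime] {N : ℕ} (hN : N ≠ 0) :
    ∃ j, p ^ j ≤ N ∧ (p.digits (N - p ^ j)).sum + 1 = (p.digits N).sum ∧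
      ¬ p ∣ N.choose (p ^ j) := by
  have hp1 := hp.out.one_lt
  obtain ⟨j, M, hM, rfl⟩ : ∃ j M, ¬ p ∣ M ∧ p ^ j * M = N :=
    ⟨_, _, not_dvd_ordCompl hp.out hN, ordProj_mul_ordCompl_eq_self N p⟩
  have hle : p ^ j ≤ p ^ j * M := le_mul_of_one_le_right (zero_le _)
    (one_le_iff_ne_zero.2 (right_ne_zero_of_mul hN))
  have hsum : (p.digits (p ^ j * M - p ^ j)).sum + 1 = (p.digits (p ^ j * M)).sum := by
    rw [← mul_tsub_one, digits_sum_pow_mul hp1, digits_sum_pow_mul hp1,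
      digits_sum_sub_one hp1 hM]
  refine ⟨j, hle, hsum, not_dvd_choose_of_digits_sum_add_eq hle ?_⟩
  rw [digits_sum_pow hp1]
  omega

end Nat

theorem Finsupp.eq_add_single_iff {σ : Type*} [DecidableEq σ] {d m : σ →₀ ℕ} {i : σ} {q : ℕ} :
    d = m + Finsupp.single i q ↔ d.erase i = m.erase i ∧ d i = m i + q := by
  constructor
  · rintro rfl
    simp [Finsupp.erase_add]
  · rintro ⟨herase, hi⟩
    ext k
    rcases eq_or_ne k i with rfl | hk
    · simpa using hi
    · simpa [Finsupp.erase_ne hk, hk.symm] using DFunLike.congr_fun herase k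

theorem disc_comm {A B : Type*} [AddCommGroup A] [AddCommGroup B] (a b : A) (g : A → B) :
    disc a (disc b g) = disc b (disc a g) := by
  funext x
  simp only [disc, add_right_comm x a b]
  abel

theorem disc_multiDisc {A B : Type*} [AddCommGroup A] [AddCommGroup B] (a : A) (l : List A)
    (g : A → B) : disc a (multiDisc l g) = multiDisc l (disc a g) := by
  induction l with
  | nil => rfl
  | cons b l ih => exact (disc_comm a b _).trans (congrArg (disc b) ih)

section pWeight

variable {σ : Type*} [Fintype σ] {p : ℕ}

def pWeight (p : ℕ) (m : σ →₀ ℕ) : ℕ := ∑ i, (p.digits (m i)).sum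

@[simp]
theorem pWeight_zero : pWeight p (0 : σ →₀ ℕ) = 0 := by simp [pWeight]

theorem pWeight_add_le [Fact p.Prime] (a b : σ →₀ ℕ) :
    pWeight p (a + b) ≤ pWeight p a + pWeight p b := by
  unfold pWeight
  rw [← Finset.sum_add_distrib]
  exact Finset.sum_le_sum fun i _ => Nat.digits_sum_add_le (a i) (b i)

theorem pWeight_single_pow (hp : 1 < p) (i : σ) (j : ℕ) :
    pWeight p (Finsupp.single i (p ^ j)) = 1 := by
  classical
  rw [pWeight, Finset.sum_eq_single i (fun k _ hk => by simp [Ne.symm hk])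
    (by simp), Finsupp.single_eq_same, Nat.digits_sum_pow hp]

theorem exists_eq_add_single_pow [Fact p.Prime] {m : σ →₀ ℕ} (hm : m ≠ 0) :
    ∃ i j m₂, m = m₂ + Finsupp.single i (p ^ j) ∧ pWeight p m = pWeight p m₂ + 1 ∧
      ¬ p ∣ (m i).choose (p ^ j) := by
  classical
  obtain ⟨i, hi⟩ := Finsupp.ne_iff.1 hm
  obtain ⟨j, hle, hsum, hchoose⟩ := Nat.exists_pow_le_digits_sum_sub_pow_add_one (p := p) hi
  refine ⟨i, j, m - Finsupp.single i (p ^ j),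
    (tsub_add_cancel_of_le (Finsupp.single_le_iff.2 hle)).symm, ?_, hchoose⟩
  rw [pWeight, pWeight, ← Fintype.sum_ite_eq' i (fun _ => 1), ← Finset.sum_add_distrib]
  refine Finset.sum_congr rfl fun k _ => ?_
  rcases eq_or_ne k i with rfl | hk
  · simpa using hsum.symm
  · simp [hk]

end pWeight

namespace MvPolynomial

variable {R σ : Type*} [CommRing R]

noncomputable def taylor (a : σ → R) : MvPolynomial σ R →ₐ[R] MvPolynomial σ R :=
  aeval fun k => X k + C (a k)

theorem eval_taylor (a x : σ → R) (f : MvPolynomial σ R) :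
    eval x (taylor a f) = eval (x + a) f := by
  rw [taylor, aeval_eq_bind₁, eval, eval₂Hom_bind₁]
  simp only [eval₂Hom_X', map_add, eval₂Hom_C, RingHom.id_apply]
  rfl

theorem disc_eval_eq_eval_taylor_sub (a : σ → R) (f : MvPolynomial σ R) :
    disc a (fun x => eval x f) = fun x => eval x (taylor a f - f) := by
  funext x
  simp [disc, eval_taylor]

theorem taylor_X_pow_char_pow {p : ℕ} [Fact p.Prime] [CharP R p] (a : σ → R) (i : σ) (j : ℕ) :
    taylor a (X i ^ p ^ j) = X i ^ p ^ j + C (a i ^ p ^ j) := by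
  rw [map_pow, taylor, aeval_X, add_pow_char_pow, ← C_pow]

theorem taylor_monomial_of_forall_mem_support (a : σ → R) {s : σ →₀ ℕ}
    (hs : ∀ k ∈ s.support, a k = 0) (c : R) : taylor a (monomial s c) = monomial s c := by
  rw [taylor, aeval_monomial, monomial_eq, algebraMap_eq]
  congr 1
  exact Finsupp.prod_congr fun k hk => by rw [hs k hk, C_0, add_zero]

section Coefficients

variable [DecidableEq σ]

theorem taylor_single_monomial (i : σ) (t c : R) (d : σ →₀ ℕ) :
    taylor (Pi.single i t) (monomial d c) =
      ∑ e ∈ Finset.range (d i + 1),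
        monomial (d.erase i + Finsupp.single i e) (c * t ^ (d i - e) * (d i).choose e) := by
  conv_lhs => rw [← Finsupp.erase_add_single i d]
  rw [monomial_add_single, map_mul, taylor_monomial_of_forall_mem_support _ (fun k hk => ?_),
    map_pow, taylor, aeval_X, Pi.single_eq_same, add_pow, Finset.mul_sum]
  · refine Finset.sum_congr rfl fun e _ => ?_
    rw [monomial_add_single, show c * t ^ (d i - e) * (d i).choose e =
      t ^ (d i - e) * (d i).choose e * c by ring, ← C_mul_monomial, C_mul, C_pow,
      ← map_natCast (C : R →+* MvPolynomial σ R)]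
    ring
  · rw [Finsupp.support_erase] at hk
    simp [Finset.ne_of_mem_erase hk]

theorem coeff_taylor_single_monomial (i : σ) (t c : R) (d m : σ →₀ ℕ) :
    coeff m (taylor (Pi.single i t) (monomial d c)) =
      if d.erase i = m.erase i ∧ m i ≤ d i then c * t ^ (d i - m i) * (d i).choose (m i)
      else 0 := by
  have hm : ∀ e, d.erase i + Finsupp.single i e = m ↔ e = m i ∧ d.erase i = m.erase i := by
    intro e
    rw [eq_comm, Finsupp.eq_add_single_iff, Finsupp.erase_idem, Finsupp.erase_same, zero_add,
      eq_comm (a := m i), eq_comm (a := m.erase i), and_comm]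
  simp only [taylor_single_monomial, coeff_sum, coeff_monomial, hm, ite_and,
    Finset.sum_ite_eq', Finset.mem_range]
  split_ifs <;> first | rfl | omega

theorem exists_polynomial_eval_eq_coeff_taylor_single (f : MvPolynomial σ R) (i : σ)
    (m : σ →₀ ℕ) : ∃ φ : Polynomial R, (∀ t, φ.eval t = coeff m (taylor (Pi.single i t) f)) ∧
      ∀ q, φ.coeff q = coeff (m + Finsupp.single i q) f * (m i + q).choose (m i) := by
  refine ⟨∑ d ∈ f.support, if d.erase i = m.erase i ∧ m i ≤ d i then
    Polynomial.C (coeff d f * (d i).choose (m i)) * Polynomial.X ^ (d i - m i) else 0,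
    fun t => ?_, fun q => ?_⟩
  · conv_rhs => rw [← support_sum_monomial_coeff f]
    rw [map_sum, coeff_sum, Polynomial.eval_finsetSum]
    refine Finset.sum_congr rfl fun d _ => ?_
    rw [coeff_taylor_single_monomial]
    split_ifs
    · simp only [Polynomial.eval_mul, Polynomial.eval_C, Polynomial.eval_pow, Polynomial.eval_X]
      ring
    · exact Polynomial.eval_zero
  · have hd : ∀ d : σ →₀ ℕ, (d.erase i = m.erase i ∧ m i ≤ d i) ∧ q = d i - m i ↔
        d = m + Finsupp.single i q := fun d => by
      rw [Finsupp.eq_add_single_iff, and_assoc]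
      exact and_congr_right fun _ => by omega
    simp only [Polynomial.finsetSum_coeff, apply_ite (Polynomial.coeff · q),
      Polynomial.coeff_C_mul_X_pow, Polynomial.coeff_zero, ← ite_and, hd, Finset.sum_ite_eq']
    split_ifs with h
    · simp
    · simp [notMem_support_iff.1 h]

end Coefficients

variable [Fintype σ] {p : ℕ} [Fact p.Prime] [CharP R p]

theorem pWeight_lt_of_mem_support_taylor_monomial_sub (a : σ → R) (m : σ →₀ ℕ) (c : R) :
    ∀ m' ∈ (taylor a (monomial m c) - monomial m c).support, pWeight p m' < pWeight p m := by
  classical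
  induction hw : pWeight p m using Nat.strong_induction_on generalizing m c with
  | _ w ih =>
  intro m' hm'
  rcases eq_or_ne m 0 with rfl | hm0
  · simp [← C_apply] at hm'
  obtain ⟨i, j, m₂, rfl, hwt, -⟩ := exists_eq_add_single_pow (p := p) hm0
  have hsplit : taylor a (monomial (m₂ + Finsupp.single i (p ^ j)) c) -
      monomial (m₂ + Finsupp.single i (p ^ j)) c =
      (taylor a (monomial m₂ c) - monomial m₂ c) * (X i ^ p ^ j + C (a i ^ p ^ j)) +
        monomial m₂ (c * a i ^ p ^ j) := by
    rw [monomial_add_single, map_mul, taylor_X_pow_char_pow, mul_comm c, ← C_mul_monomial]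
    ring
  rw [hsplit] at hm'
  rcases Finset.mem_union.1 (support_add hm') with h | h
  · obtain ⟨u, hu, v, hv, rfl⟩ := Finset.mem_add.1 (support_mul _ _ h)
    have hu' := ih _ (by omega) m₂ c rfl u hu
    have hv' : pWeight p v ≤ 1 := by
      rcases Finset.mem_union.1 (support_add hv) with hv | hv
      · rw [X_pow_eq_monomial] at hv
        rw [Finset.mem_singleton.1 (support_monomial_subset hv),
          pWeight_single_pow (Fact.out : p.Prime).one_lt]
      · rw [Finset.mem_singleton.1 (support_monomial_subset hv)]
        simp
    have := pWeight_add_le (p := p) u v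
    omega
  · rw [Finset.mem_singleton.1 (support_monomial_subset h)]
    omega

theorem pWeight_lt_of_mem_support_taylor_sub {f : MvPolynomial σ R} {d : ℕ}
    (hf : ∀ m ∈ f.support, pWeight p m ≤ d) (a : σ → R) :
    ∀ m' ∈ (taylor a f - f).support, pWeight p m' < d := by
  classical
  intro m' hm'
  rw [← support_sum_monomial_coeff f, map_sum, ← Finset.sum_sub_distrib] at hm'
  obtain ⟨m, hm, hm'⟩ := Finset.mem_biUnion.1 (support_sum hm')
  exact (pWeight_lt_of_mem_support_taylor_monomial_sub a m _ m' hm').trans_le (hf m hm)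

theorem multiDisc_eval_eq_zero_of_pWeight_lt {f : MvPolynomial σ R} (l : List (σ → R))
    (hf : ∀ m ∈ f.support, pWeight p m < l.length) :
    multiDisc l (fun x => eval x f) = 0 := by
  induction l generalizing f with
  | nil =>
    obtain rfl : f = 0 := support_eq_empty.1 (Finset.eq_empty_of_forall_notMem fun m hm =>
      (Nat.not_lt_zero _ (hf m hm)))
    funext x
    simp [multiDisc]
  | cons a l ih =>
    rw [multiDisc, disc_multiDisc, disc_eval_eq_eval_taylor_sub]
    exact ih fun m' hm' =>
      pWeight_lt_of_mem_support_taylor_sub (fun m hm => Nat.lt_succ_iff.1 (hf m hm)) a m' hm'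

theorem exists_mem_support_taylor_sub [IsDomain R] [Infinite R] {f : MvPolynomial σ R}
    {m : σ →₀ ℕ} (hm : m ∈ f.support) (hm0 : m ≠ 0) :
    ∃ (a : σ → R) (m₂ : σ →₀ ℕ), m₂ ∈ (taylor a f - f).support ∧
      pWeight p m = pWeight p m₂ + 1 := by
  classical
  obtain ⟨i, j, m₂, rfl, hwt, hchoose⟩ := exists_eq_add_single_pow (p := p) hm0
  obtain ⟨φ, hφeval, hφcoeff⟩ := exists_polynomial_eval_eq_coeff_taylor_single f i m₂
  have hψ : (φ - Polynomial.C (coeff m₂ f)).coeff (p ^ j) ≠ 0 := by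
    rw [Polynomial.coeff_sub, Polynomial.coeff_C,
      if_neg (pow_ne_zero j (Fact.out : p.Prime).ne_zero), sub_zero, hφcoeff, Nat.choose_symm_add]
    refine mul_ne_zero (mem_support_iff.1 hm) ?_
    simpa [CharP.cast_eq_zero_iff R p] using hchoose
  obtain ⟨t, ht⟩ : ∃ t, (φ - Polynomial.C (coeff m₂ f)).eval t ≠ 0 := by
    by_contra! h
    exact hψ (by rw [Polynomial.zero_of_eval_zero _ h, Polynomial.coeff_zero])
  refine ⟨Pi.single i t, m₂, ?_, hwt⟩
  rw [mem_support_iff, coeff_sub, ← hφeval]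
  simpa using ht

theorem exists_multiDisc_eval_ne_zero [IsDomain R] [Infinite R] {f : MvPolynomial σ R}
    {m : σ →₀ ℕ} (hm : m ∈ f.support) :
    ∃ l : List (σ → R), l.length = pWeight p m ∧ multiDisc l (fun x => eval x f) ≠ 0 := by
  induction hw : pWeight p m generalizing f m with
  | zero =>
    refine ⟨[], rfl, fun h => mem_support_iff.1 hm ?_⟩
    rw [show f = 0 from funext fun x => congrFun h x, coeff_zero]
  | succ w ih =>
    obtain ⟨a, m₂, hm₂, hwt⟩ := exists_mem_support_taylor_sub (p := p) hm
      (by rintro rfl; simp at hw)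
    obtain ⟨l, hl, hne⟩ := ih hm₂ (by omega)
    refine ⟨a :: l, by simp [hl], ?_⟩
    rwa [multiDisc, disc_multiDisc, disc_eval_eq_eval_taylor_sub]

end MvPolynomial

theorem fdeg_eval_eq_pWeightDeg_of_infinite_domain_general
    (p : ℕ) (hp : p.Prime) (R : Type*) [CommRing R] [IsDomain R] [CharP R p] [Infinite R]
    (n : ℕ) (f : MvPolynomial (Fin n) R) (hf : f ≠ 0) :
    FdegLE (fun x => MvPolynomial.eval x f) (pWeightDeg p f) ∧
    (1 ≤ pWeightDeg p f → ∃ l : List (Fin n → R), l.length = pWeightDeg p f ∧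
      multiDisc l (fun x => MvPolynomial.eval x f) ≠ 0) ∧
    (pWeightDeg p f = 0 → (fun x => MvPolynomial.eval x f) ≠ 0) := by
  have := Fact.mk hp
  have hdeg : pWeightDeg p f = f.support.sup (pWeight p) := rfl
  obtain ⟨m, hm, hmax⟩ :=
    Finset.exists_mem_eq_sup _ (MvPolynomial.support_nonempty.2 hf) (pWeight p)
  obtain ⟨l, hl, hne⟩ := MvPolynomial.exists_multiDisc_eval_ne_zero (p := p) hm
  rw [hdeg, hmax, ← hl]
  refine ⟨fun l' hl' => MvPolynomial.multiDisc_eval_eq_zero_of_pWeight_lt l' fun m' hm' => ?_,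
    fun _ => ⟨l, rfl, hne⟩, fun h0 => ?_⟩
  · rw [hl', hl, ← hmax]
    exact Nat.lt_succ_of_le (Finset.le_sup hm')
  · rwa [List.eq_nil_of_length_eq_zero h0] at hne

/-- **Theorem 4.13.** Let `R` be an infinite commutative domain of prime characteristic
`p` and let `f ∈ R[t_1, …, t_n]` be a nonzero polynomial. Then `fdeg(E(f)) = σ_p(f)`:
with `d := σ_p(f)`, every `(d+1)`-fold iterated difference of the evaluation function
`E(f)` vanishes, but if `d ≥ 1` there are `a_1, …, a_d ∈ R^n` with
`Δ_{a_1} ⋯ Δ_{a_d} E(f) ≠ 0`, and if `d = 0` then `E(f) ≠ 0`. -/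
theorem fdeg_eval_eq_pWeightDeg_of_infinite_domain
    (p : ℕ) (hp : p.Prime) (R : Type*) [CommRing R] [IsDomain R] [CharP R p] [Infinite R]
    (n : ℕ) (hn : 1 ≤ n) (f : MvPolynomial (Fin n) R) (hf : f ≠ 0) :
    FdegLE (fun x => MvPolynomial.eval x f) (pWeightDeg p f) ∧
    (1 ≤ pWeightDeg p f → ∃ l : List (Fin n → R), l.length = pWeightDeg p f ∧
      multiDisc l (fun x => MvPolynomial.eval x f) ≠ 0) ∧
    (pWeightDeg p f = 0 → (fun x => MvPolynomial.eval x f) ≠ 0) :=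
  fdeg_eval_eq_pWeightDeg_of_infinite_domain_general p hp R n f hf
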